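/- Let Ω ⊆ ℂⁿ be open, and let φ₁ = c·log(∏ₖ |z_{i_k}|^{2α_k}) + g₁ and φ₂ = c·log(∏ₖ |w_{i_k}|^{2α_k}) + g₂, where g₁, g₂ are continuous on Ω, c > 0, α_k ≥ 0, and for each k we have w_{i_k} = u_k · z_{i_k} on Ω for nowhere-vanishing holomorphic functions u_k. Then φ₁ − φ₂ extends to a continuous function on Ω, and max(φ₁, φ₂) = c·log(∏ₖ |z_{i_k}|^{2α_k}) + g for some continuous function g on Ω. -/

import Mathlib

open Finset

/-! Since `wₖ = uₖ·zₖ` with `uₖ` a unit, `log ∏ₖ |wₖ|^(2αₖ) = log ∏ₖ |zₖ|^(2αₖ) + log ∏ₖ |uₖ|^(2αₖ)`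
off the divisor, and the last term is continuous on all of `Ω`. Hence `φ₂` has the same shape as
`φ₁` with `g₂` replaced by `g₂ + c·log ∏ₖ |uₖ|^(2αₖ)`, and the common singular term cancels in
`φ₁ − φ₂` and factors out of `max(φ₁, φ₂)`. -/

section NormRpow

variable {ι 𝕜 : Type*} [NormedDivisionRing 𝕜] (s : Finset ι) (a : ι → ℝ)

lemma prod_norm_mul_rpow (u z : ι → 𝕜) :
    ∏ k ∈ s, ‖u k * z k‖ ^ a k = (∏ k ∈ s, ‖u k‖ ^ a k) * ∏ k ∈ s, ‖z k‖ ^ a k := by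
  rw [← prod_mul_distrib]
  refine prod_congr rfl fun k _ => ?_
  rw [norm_mul, Real.mul_rpow (norm_nonneg _) (norm_nonneg _)]

lemma prod_norm_rpow_pos {z : ι → 𝕜} (hz : ∀ k ∈ s, z k ≠ 0) : 0 < ∏ k ∈ s, ‖z k‖ ^ a k :=
  prod_pos fun k hk => Real.rpow_pos_of_pos (norm_pos_iff.mpr (hz k hk)) _

lemma log_prod_norm_mul_rpow {u z : ι → 𝕜} (hu : ∀ k ∈ s, u k ≠ 0) (hz : ∀ k ∈ s, z k ≠ 0) :
    Real.log (∏ k ∈ s, ‖u k * z k‖ ^ a k) =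
      Real.log (∏ k ∈ s, ‖u k‖ ^ a k) + Real.log (∏ k ∈ s, ‖z k‖ ^ a k) := by
  rw [prod_norm_mul_rpow, Real.log_mul (prod_norm_rpow_pos s a hu).ne'
    (prod_norm_rpow_pos s a hz).ne']

lemma ContinuousOn.log_prod_norm_rpow {X : Type*} [TopologicalSpace X] {Ω : Set X}
    {u : ι → X → 𝕜} (hu : ∀ k ∈ s, ContinuousOn (u k) Ω) (hne : ∀ k ∈ s, ∀ x ∈ Ω, u k x ≠ 0) :
    ContinuousOn (fun x => Real.log (∏ k ∈ s, ‖u k x‖ ^ a k)) Ω := by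
  refine ContinuousOn.log ?_ fun x hx => (prod_norm_rpow_pos s a fun k hk => hne k hk x hx).ne'
  refine continuousOn_finsetProd s fun k hk => ?_
  exact (hu k hk).norm.rpow_const fun x hx => Or.inl (norm_ne_zero_iff.mpr (hne k hk x hx))

end NormRpow

theorem stmt_13_general {n m : ℕ} (Ω : Set (Fin n → ℂ))
    (z w u : Fin m → (Fin n → ℂ) → ℂ)
    (hu : ∀ k, DifferentiableOn ℂ (u k) Ω)
    (hunit : ∀ k, ∀ x ∈ Ω, u k x ≠ 0)
    (hrel : ∀ k, ∀ x ∈ Ω, w k x = u k x * z k x)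
    (c : ℝ) (α : Fin m → ℝ)
    (g₁ g₂ : (Fin n → ℂ) → ℝ)
    (hg₁ : ContinuousOn g₁ Ω) (hg₂ : ContinuousOn g₂ Ω)
    (φ₁ φ₂ : (Fin n → ℂ) → ℝ)
    (hφ₁ : ∀ x ∈ Ω, φ₁ x =
      c * Real.log (∏ k, ‖z k x‖ ^ (2 * α k)) + g₁ x)
    (hφ₂ : ∀ x ∈ Ω, φ₂ x =
      c * Real.log (∏ k, ‖w k x‖ ^ (2 * α k)) + g₂ x) :
    (∃ F : (Fin n → ℂ) → ℝ, ContinuousOn F Ω ∧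
      ∀ x ∈ Ω, (∀ k, z k x ≠ 0) → φ₁ x - φ₂ x = F x) ∧
    ∃ g : (Fin n → ℂ) → ℝ, ContinuousOn g Ω ∧
      ∀ x ∈ Ω, (∀ k, z k x ≠ 0) →
        max (φ₁ x) (φ₂ x) =
          c * Real.log (∏ k, ‖z k x‖ ^ (2 * α k)) + g x := by
  set L : (Fin n → ℂ) → ℝ := fun x => Real.log (∏ k, ‖u k x‖ ^ (2 * α k))
  have hL : ContinuousOn L Ω :=
    ContinuousOn.log_prod_norm_rpow _ _ (fun k _ => (hu k).continuousOn) fun k _ => hunit k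
  have hφ₂' : ∀ x ∈ Ω, (∀ k, z k x ≠ 0) →
      φ₂ x = c * Real.log (∏ k, ‖z k x‖ ^ (2 * α k)) + (g₂ x + c * L x) := by
    intro x hx hzx
    have hw : ∀ k, w k x = u k x * z k x := fun k => hrel k x hx
    simp only [hφ₂ x hx, hw]
    rw [log_prod_norm_mul_rpow _ _ (fun k _ => hunit k x hx) fun k _ => hzx k]
    ring
  have hgL : ContinuousOn (fun x => g₂ x + c * L x) Ω := hg₂.add (continuousOn_const.mul hL)
  refine ⟨⟨fun x => g₁ x - (g₂ x + c * L x), hg₁.sub hgL, fun x hx hzx => ?_⟩,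
    fun x => max (g₁ x) (g₂ x + c * L x), hg₁.sup' hgL, fun x hx hzx => ?_⟩
  · rw [hφ₁ x hx, hφ₂' x hx hzx]
    ring
  · rw [hφ₁ x hx, hφ₂' x hx hzx, max_add_add_left]

/-- Comparison of two functions with the same weakly analytic singularity type:
if `φ₁ = c·log(∏ₖ |zₖ|^(2αₖ)) + g₁` and `φ₂ = c·log(∏ₖ |wₖ|^(2αₖ)) + g₂` with
`g₁, g₂` continuous on `Ω` and `wₖ = uₖ·zₖ` for nowhere-vanishing holomorphic `uₖ`,
then `φ₁ − φ₂` extends continuously over `Ω`, and `max(φ₁, φ₂)` equals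
`c·log(∏ₖ |zₖ|^(2αₖ)) + g` for a continuous function `g` on `Ω`. -/
theorem stmt_13 {n m : ℕ} (Ω : Set (Fin n → ℂ)) (hΩ : IsOpen Ω)
    (z w u : Fin m → (Fin n → ℂ) → ℂ)
    (hz : ∀ k, DifferentiableOn ℂ (z k) Ω)
    (hw : ∀ k, DifferentiableOn ℂ (w k) Ω)
    (hu : ∀ k, DifferentiableOn ℂ (u k) Ω)
    (hunit : ∀ k, ∀ x ∈ Ω, u k x ≠ 0)
    (hrel : ∀ k, ∀ x ∈ Ω, w k x = u k x * z k x)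
    (c : ℝ) (hc : 0 < c) (α : Fin m → ℝ) (hα : ∀ k, 0 ≤ α k)
    (g₁ g₂ : (Fin n → ℂ) → ℝ)
    (hg₁ : ContinuousOn g₁ Ω) (hg₂ : ContinuousOn g₂ Ω)
    (φ₁ φ₂ : (Fin n → ℂ) → ℝ)
    (hφ₁ : ∀ x ∈ Ω, φ₁ x =
      c * Real.log (∏ k, ‖z k x‖ ^ (2 * α k)) + g₁ x)
    (hφ₂ : ∀ x ∈ Ω, φ₂ x =
      c * Real.log (∏ k, ‖w k x‖ ^ (2 * α k)) + g₂ x) :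
    (∃ F : (Fin n → ℂ) → ℝ, ContinuousOn F Ω ∧
      ∀ x ∈ Ω, (∀ k, z k x ≠ 0) → φ₁ x - φ₂ x = F x) ∧
    ∃ g : (Fin n → ℂ) → ℝ, ContinuousOn g Ω ∧
      ∀ x ∈ Ω, (∀ k, z k x ≠ 0) →
        max (φ₁ x) (φ₂ x) =
          c * Real.log (∏ k, ‖z k x‖ ^ (2 * α k)) + g x :=
  stmt_13_general Ω z w u hu hunit hrel c α g₁ g₂ hg₁ hg₂ φ₁ φ₂ hφ₁ hφ₂
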